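/- Let N ≥ 2 be an integer and x : ℤ/Nℤ → ℂ a function. Then det(F_N·X_N) = ∏_{d | N} det(G_d), where for each positive divisor d of N, G_d is the square matrix indexed by u, v ∈ (ℤ/N_dℤ)^× whose (u,v)-entry is d·x̂_d(u·v^{−1}). -/

import Mathlib

/-- The Fourier matrix `F_N` with `(m,n)` entry `exp(2πi·mn/N)`, `0 ≤ m,n ≤ N−1`. -/
noncomputable def fourierMatrix (N : ℕ) : Matrix (Fin N) (Fin N) ℂ :=
  Matrix.of fun m n => Complex.exp (2 * Real.pi * Complex.I * (m : ℕ) * (n : ℕ) / N)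

/-- The semigroup matrix `X_N` attached to `x : ℤ/Nℤ → ℂ`:
its `(i,j)` entry is `x(ij mod N)`, `0 ≤ i,j ≤ N−1`. -/
def XMat (N : ℕ) (x : ZMod N → ℂ) : Matrix (Fin N) (Fin N) ℂ :=
  Matrix.of fun i j => x (((i : ℕ) : ZMod N) * ((j : ℕ) : ZMod N))

/-- For a divisor `d` of `N` and `t ∈ ℤ/N_dℤ` (`N_d = N/d`),
`x̂_d(t) = Σ_{r=0}^{N_d−1} x(dr mod N)·exp(2πi·tr/N_d)`. -/
noncomputable def xhat (N d : ℕ) (x : ZMod N → ℂ) (t : ZMod (N / d)) : ℂ :=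
  ∑ r ∈ Finset.range (N / d),
    x (((d * r : ℕ) : ZMod N)) *
      Complex.exp (2 * Real.pi * Complex.I * (ZMod.val t) * r / ((N / d : ℕ) : ℂ))

/-- The group determinant over `(ℤ/nℤ)ˣ` attached to `f : ℤ/nℤ → ℂ`:
the determinant of the matrix indexed by `u, v ∈ (ℤ/nℤ)ˣ` with `(u,v)` entry
`f(u·v⁻¹)`.  (The value for `n = 0` is irrelevant and set to `1`.) -/
noncomputable def unitsGroupDet : (n : ℕ) → (ZMod n → ℂ) → ℂ
  | 0, _ => 1
  | (n + 1), f =>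
      Matrix.det (Matrix.of fun u v : (ZMod (n + 1))ˣ => f ((u * v⁻¹ : (ZMod (n + 1))ˣ) : ZMod (n + 1)))


/-!
Write `M = F_N X_N`. If `d ∣ gcd(j, N)`, then `n ↦ x(n j)` has period `N/d`; splitting
`n = r + (N/d) s` and summing the `d`-th roots of unity over `s` gives
`M m j = [d ∣ m] · d · ∑_{r < N/d} ζ_N^{m r} x(r j)`. With `d = gcd(j, N)` this shows
`M m j = 0` unless `gcd(j, N) ∣ m`, so `M` is block triangular for the blocks
`{i : gcd(i, N) = d}`, ordered by decreasing `d`, and `det M` is the product of the diagonal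
blocks. The block of `d` is indexed by `(ℤ/(N/d)ℤ)ˣ` through `u ↦ d u`, and the substitution
`r ↦ r v⁻¹` turns its `(u, v)` entry into `d · x̂_d(u v⁻¹)`.
-/

open Finset Complex

theorem Finset.sum_range_mul_eq_sum_sum {M : Type*} [AddCommMonoid M] (f : ℕ → M) (p d : ℕ) :
    ∑ n ∈ range (p * d), f n = ∑ s ∈ range d, ∑ r ∈ range p, f (p * s + r) := by
  induction d with
  | zero => simp
  | succ d ih => rw [Nat.mul_succ, sum_range_add, ih, sum_range_succ]

theorem ZMod.sum_range_natCast {M : Type*} [AddCommMonoid M] (n : ℕ) [NeZero n]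
    (f : ZMod n → M) : ∑ r ∈ range n, f r = ∑ a, f a := by
  obtain ⟨k, rfl⟩ := Nat.exists_eq_succ_of_ne_zero (NeZero.ne n)
  rw [← Fin.sum_univ_eq_sum_range (fun r => f r)]
  exact Fintype.sum_congr _ _ fun i => congrArg f (ZMod.natCast_zmod_val (n := k + 1) i)

theorem ZMod.periodic_natCast_mul {N p j : ℕ} (h : N ∣ p * j) :
    Function.Periodic (fun n : ℕ => (n : ZMod N) * j) p := by
  intro n
  show ((n + p : ℕ) : ZMod N) * j = n * j
  rw [Nat.cast_add, add_mul, ← Nat.cast_mul p j, (ZMod.natCast_eq_zero_iff _ _).2 h, add_zero]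

theorem Fin.image_gcd_eq_divisors (N : ℕ) :
    univ.image (fun i : Fin N => Nat.gcd i N) = N.divisors := by
  ext d
  simp only [mem_image, mem_univ, true_and, Nat.mem_divisors]
  constructor
  · rintro ⟨i, rfl⟩
    exact ⟨Nat.gcd_dvd_right _ _, i.pos.ne'⟩
  · rintro ⟨hd, hN⟩
    refine ⟨⟨d % N, Nat.mod_lt _ (Nat.pos_of_ne_zero hN)⟩, ?_⟩
    rw [Fin.val_mk, ← Nat.gcd_rec N d, Nat.gcd_eq_right hd]

noncomputable def zeta (n : ℕ) : ℂ := exp (2 * Real.pi * I / n)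

theorem isPrimitiveRoot_zeta {n : ℕ} (hn : n ≠ 0) : IsPrimitiveRoot (zeta n) n :=
  isPrimitiveRoot_exp n hn

theorem exp_eq_zeta_pow (n k : ℕ) : exp (2 * Real.pi * I * k / n) = zeta n ^ k := by
  rw [zeta, ← exp_nat_mul]
  ring_nf

theorem zeta_pow_eq_stdAddChar (n : ℕ) [NeZero n] (k : ℕ) :
    zeta n ^ k = ZMod.stdAddChar (k : ZMod n) := by
  rw [← exp_eq_zeta_pow]
  simpa using (ZMod.stdAddChar_coe (N := n) k).symm

theorem zeta_mul_pow {p : ℕ} (hp : p ≠ 0) (d : ℕ) : zeta (p * d) ^ p = zeta d := by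
  rw [← exp_eq_zeta_pow, zeta]
  rcases eq_or_ne d 0 with rfl | hd
  · simp
  · congr 1
    push_cast
    field_simp

theorem sum_range_zeta_pow_mul {d : ℕ} (hd : d ≠ 0) (m : ℕ) :
    ∑ s ∈ range d, zeta d ^ (m * s) = if d ∣ m then (d : ℂ) else 0 := by
  have hζ := isPrimitiveRoot_zeta hd
  simp only [pow_mul]
  split_ifs with hdm
  · simp [(hζ.pow_eq_one_iff_dvd m).2 hdm]
  · have hne : zeta d ^ m ≠ 1 := mt (hζ.pow_eq_one_iff_dvd m).1 hdm
    rw [geom_sum_eq hne, ← pow_mul, mul_comm, pow_mul, hζ.pow_eq_one, one_pow, sub_self,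
      zero_div]

theorem sum_range_zeta_pow_mul_of_periodic {f : ℕ → ℂ} {p d N : ℕ}
    (hf : Function.Periodic f p) (hp : p ≠ 0) (hd : d ≠ 0) (hN : p * d = N) (m : ℕ) :
    ∑ n ∈ range N, zeta N ^ (m * n) * f n
      = (if d ∣ m then (d : ℂ) else 0) * ∑ r ∈ range p, zeta N ^ (m * r) * f r := by
  subst hN
  have hsplit : ∀ s r, zeta (p * d) ^ (m * (p * s + r)) * f (p * s + r)
      = zeta d ^ (m * s) * (zeta (p * d) ^ (m * r) * f r) := by
    intro s r
    have hper : f (r + s * p) = f r := by simpa using hf.nat_mul s r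
    rw [add_comm, mul_comm p s, hper, ← zeta_mul_pow hp d]
    ring
  simp only [sum_range_mul_eq_sum_sum, hsplit, ← mul_sum, ← sum_mul, sum_range_zeta_pow_mul hd]

def unitsEquivGcdEq {N d : ℕ} (hd : d ∣ N) [NeZero (N / d)] :
    (ZMod (N / d))ˣ ≃ {i : Fin N // Nat.gcd i N = d} where
  toFun u :=
    ⟨⟨d * (u : ZMod (N / d)).val, (Nat.lt_div_iff_mul_lt' hd _).1 (ZMod.val_lt _)⟩, by
      have h := Nat.gcd_mul_left d (u : ZMod (N / d)).val (N / d)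
      rwa [Nat.mul_div_cancel' hd, (ZMod.val_coe_unit_coprime u).gcd_eq_one, mul_one] at h⟩
  invFun i := ZMod.unitOfCoprime (i / d) (by
    obtain ⟨i, rfl⟩ := i
    exact Nat.coprime_div_gcd_div_gcd (Nat.gcd_pos_of_pos_right _ i.pos))
  left_inv u := by
    have hd0 : 0 < d := Nat.pos_of_ne_zero ((Nat.div_ne_zero_iff_of_dvd hd).1 (NeZero.ne _)).2
    ext
    simp [Nat.mul_div_cancel_left _ hd0]
  right_inv i := by
    obtain ⟨i, rfl⟩ := i
    ext
    simp only [ZMod.coe_unitOfCoprime]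
    rw [ZMod.val_cast_of_lt (Nat.div_lt_div_of_lt_of_dvd hd i.isLt),
      Nat.mul_div_cancel' (Nat.gcd_dvd_left _ _)]

theorem coe_unitsEquivGcdEq {N d : ℕ} (hd : d ∣ N) [NeZero (N / d)] (u : (ZMod (N / d))ˣ) :
    ((unitsEquivGcdEq hd u : Fin N) : ℕ) = d * (u : ZMod (N / d)).val :=
  rfl

theorem unitsGroupDet_of_neZero (n : ℕ) [NeZero n] (f : ZMod n → ℂ) :
    unitsGroupDet n f = (Matrix.of fun u v : (ZMod n)ˣ => f (u * v⁻¹ : (ZMod n)ˣ)).det := by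
  obtain ⟨k, rfl⟩ := Nat.exists_eq_succ_of_ne_zero (NeZero.ne n)
  rfl

section Entries

variable {N : ℕ} (x : ZMod N → ℂ)

theorem fourierMatrix_mul_XMat_apply (m j : Fin N) :
    (fourierMatrix N * XMat N x) m j
      = ∑ n ∈ range N, zeta N ^ ((m : ℕ) * n) * x (n * (j : ℕ)) := by
  rw [Matrix.mul_apply, ← Fin.sum_univ_eq_sum_range]
  refine sum_congr rfl fun n _ => ?_
  rw [← exp_eq_zeta_pow]
  simp [fourierMatrix, XMat, mul_assoc]

theorem fourierMatrix_mul_XMat_apply_of_dvd {d : ℕ} (hd : d ∣ N) (m j : Fin N)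
    (hdj : d ∣ (j : ℕ)) :
    (fourierMatrix N * XMat N x) m j
      = (if d ∣ (m : ℕ) then (d : ℂ) else 0) *
          ∑ r ∈ range (N / d), zeta N ^ ((m : ℕ) * r) * x (r * (j : ℕ)) := by
  have hd0 : d ≠ 0 := ne_zero_of_dvd_ne_zero m.pos.ne' hd
  have hNd : N / d ≠ 0 := (Nat.div_ne_zero_iff_of_dvd hd).2 ⟨m.pos.ne', hd0⟩
  have hperiod : N ∣ N / d * j := by
    obtain ⟨j', hj'⟩ := hdj
    rw [hj', ← mul_assoc, Nat.div_mul_cancel hd]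
    exact dvd_mul_right _ _
  rw [fourierMatrix_mul_XMat_apply]
  exact sum_range_zeta_pow_mul_of_periodic ((ZMod.periodic_natCast_mul hperiod).comp x) hNd hd0
    (Nat.div_mul_cancel hd) m

theorem fourierMatrix_mul_XMat_apply_eq_zero (m j : Fin N) (h : ¬ Nat.gcd j N ∣ m) :
    (fourierMatrix N * XMat N x) m j = 0 := by
  rw [fourierMatrix_mul_XMat_apply_of_dvd x (Nat.gcd_dvd_right _ _) m j (Nat.gcd_dvd_left _ _),
    if_neg h, zero_mul]

theorem blockTriangular_fourierMatrix_mul_XMat :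
    (fourierMatrix N * XMat N x).BlockTriangular fun i => OrderDual.toDual (Nat.gcd i N) := by
  intro i j hij
  refine fourierMatrix_mul_XMat_apply_eq_zero x i j fun hdvd => ?_
  have hdvd_gcd : Nat.gcd j N ∣ Nat.gcd i N := Nat.dvd_gcd hdvd (Nat.gcd_dvd_right _ _)
  exact (Nat.le_of_dvd (Nat.gcd_pos_of_pos_right _ i.pos) hdvd_gcd).not_gt hij

theorem xhat_eq_sum_zmod {d : ℕ} [NeZero (N / d)] (t : ZMod (N / d)) :
    xhat N d x t = ∑ a : ZMod (N / d), x (d * a.val : ℕ) * ZMod.stdAddChar (t * a) := by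
  rw [xhat, ← ZMod.sum_range_natCast]
  refine sum_congr rfl fun r hr => ?_
  have hcast : t * r = ((t.val * r : ℕ) : ZMod (N / d)) := by
    push_cast
    rw [ZMod.natCast_zmod_val]
  rw [ZMod.val_cast_of_lt (mem_range.1 hr), hcast, ← zeta_pow_eq_stdAddChar, ← exp_eq_zeta_pow]
  push_cast
  ring_nf

theorem sum_range_zeta_pow_mul_eq_xhat {d : ℕ} (hd : d ∣ N) [NeZero (N / d)]
    (u v : (ZMod (N / d))ˣ) :
    ∑ r ∈ range (N / d), zeta N ^ (d * (u : ZMod (N / d)).val * r) *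
        x (r * (d * (v : ZMod (N / d)).val : ℕ))
      = xhat N d x (u * v⁻¹ : (ZMod (N / d))ˣ) := by
  have hdn : d * (N / d) = N := Nat.mul_div_cancel' hd
  have hd0 : d ≠ 0 := ((Nat.div_ne_zero_iff_of_dvd hd).1 (NeZero.ne _)).2
  have hζ : zeta N ^ d = zeta (N / d) := by simpa only [hdn] using zeta_mul_pow hd0 (N / d)
  have hcast : ∀ k l : ℕ, (k : ZMod (N / d)) = l →
      ((d * k : ℕ) : ZMod N) = (d * l : ℕ) := by
    intro k l hkl
    rw [ZMod.natCast_eq_natCast_iff] at hkl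
    exact (ZMod.natCast_eq_natCast_iff _ _ _).2 (hdn ▸ hkl.mul_left' d)
  have hterm : ∀ r : ℕ, zeta N ^ (d * (u : ZMod (N / d)).val * r) *
        x (r * (d * (v : ZMod (N / d)).val : ℕ))
      = ZMod.stdAddChar ((u : ZMod (N / d)) * (r : ZMod (N / d))) *
          x (d * ((r : ZMod (N / d)) * (v : ZMod (N / d))).val : ℕ) := by
    intro r
    rw [mul_assoc, pow_mul, hζ, zeta_pow_eq_stdAddChar]
    congr 2
    · push_cast
      rw [ZMod.natCast_zmod_val]
    · rw [← Nat.cast_mul, mul_left_comm]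
      apply hcast
      push_cast
      rw [ZMod.natCast_zmod_val, ZMod.natCast_zmod_val]
  simp only [hterm]
  rw [ZMod.sum_range_natCast (N / d) fun a =>
      ZMod.stdAddChar ((u : ZMod (N / d)) * a) * x (d * (a * (v : ZMod (N / d))).val : ℕ),
    xhat_eq_sum_zmod, ← Equiv.sum_comp (Units.mulRight v⁻¹)]
  refine Fintype.sum_congr _ _ fun a => ?_
  simp only [Units.mulRight_apply, Units.inv_mul_cancel_right, Units.val_mul]
  rw [mul_comm, mul_left_comm, mul_comm a]

theorem fourierMatrix_mul_XMat_apply_unitsEquivGcdEq {d : ℕ} (hd : d ∣ N) [NeZero (N / d)]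
    (u v : (ZMod (N / d))ˣ) :
    (fourierMatrix N * XMat N x) (unitsEquivGcdEq hd u) (unitsEquivGcdEq hd v)
      = d * xhat N d x (u * v⁻¹ : (ZMod (N / d))ˣ) := by
  rw [fourierMatrix_mul_XMat_apply_of_dvd x hd _ _ (by simp [coe_unitsEquivGcdEq]),
    coe_unitsEquivGcdEq, coe_unitsEquivGcdEq, if_pos (dvd_mul_right _ _)]
  exact congrArg _ (sum_range_zeta_pow_mul_eq_xhat x hd u v)

end Entries

theorem det_fourierMatrix_mul_XMat_general (N : ℕ) (x : ZMod N → ℂ) :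
    (fourierMatrix N * XMat N x).det =
      ∏ d ∈ N.divisors, unitsGroupDet (N / d) (fun t => (d : ℂ) * xhat N d x t) := by
  have hblocks : univ.image (fun i : Fin N => OrderDual.toDual (Nat.gcd i N))
      = N.divisors.image OrderDual.toDual := by
    rw [← Fin.image_gcd_eq_divisors, image_image]
    rfl
  rw [(blockTriangular_fourierMatrix_mul_XMat x).det, hblocks,
    prod_image fun _ _ _ _ h => OrderDual.toDual.injective h]
  refine prod_congr rfl fun d hd => ?_
  obtain ⟨hdN, hN⟩ := Nat.mem_divisors.1 hd
  have : NeZero (N / d) :=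
    ⟨(Nat.div_ne_zero_iff_of_dvd hdN).2 ⟨hN, (Nat.pos_of_mem_divisors hd).ne'⟩⟩
  rw [unitsGroupDet_of_neZero]
  refine (Matrix.det_submatrix_equiv_self (unitsEquivGcdEq hdN) _).symm.trans
    (congrArg Matrix.det ?_)
  ext u v
  exact fourierMatrix_mul_XMat_apply_unitsEquivGcdEq x hdN u v

/-- `det(F_N·X_N) = ∏_{d ∣ N} det G_d`, where `G_d` is the matrix indexed by
`u, v ∈ (ℤ/N_dℤ)ˣ` with `(u,v)` entry `d·x̂_d(u·v⁻¹)`. -/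
theorem det_fourierMatrix_mul_XMat (N : ℕ) (hN : 2 ≤ N) (x : ZMod N → ℂ) :
    (fourierMatrix N * XMat N x).det =
      ∏ d ∈ N.divisors, unitsGroupDet (N / d) (fun t => (d : ℂ) * xhat N d x t) :=
  det_fourierMatrix_mul_XMat_general N x
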